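/- Define the bounded bilinear map D on ℓ² ≅ ⊕_{j≥1} ℝ^{2^j} blockwise by D_j(u,v) = ⟨u, w_j⟩ M_j(π/4) v, where w_j ∈ ℝ^{2^j} has all entries 2^{−j/2}, and let α ∈ ℓ² be the vector with block components α_{j,k} = 1/(j·2^{j/2}) for 1 ≤ k ≤ 2^j (so Σ_j ‖α_j‖² = Σ_j 1/j² < ∞). For 1 ≤ k ≤ 2^j, set 𝒮_{j,k}(α) = sup{ |(D_j(v,v))_k| : v ∈ ℝ^{2^j}, |v_m| ≤ α_{j,m} for all m }. Then ‖𝒮_j(α)‖² = 1/j⁴ + (2^j − 1)/(16 j⁴) ≥ 2^j/(16 j⁴) for every j ≥ 1, and hence Σ_{j≥1} Σ_{k=1}^{2^j} 𝒮_{j,k}(α)² = ∞. Thus D is bounded from ℓ² × ℓ² to ℓ² (with ‖D(u,v)‖ ≤ ‖u‖‖v‖) but 𝒮(α) ∉ ℓ²: boundedness of D does not imply that the reverse-norm space is closed under the action of D. -/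

import Mathlib

/-- The equivalence `Fin 2^j ⊕ Fin 2^j ≃ Fin 2^(j+1)` used to assemble block matrices. -/
def pe (j : ℕ) : Fin (2 ^ j) ⊕ Fin (2 ^ j) ≃ Fin (2 ^ (j + 1)) :=
  finSumFinEquiv.trans (finCongr (by rw [pow_succ, mul_two] : (2 : ℕ) ^ (j + 1) = 2 ^ j + 2 ^ j).symm)

/-- The matrices `M_j(θ)`: `M_1(θ) = [[cos θ, sin θ], [sin θ, −cos θ]]` and
`M_{j+1}(θ)` is built from `M_j(θ)` in 2×2 block form. (`M_0` is a dummy value;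
all statements concern `j ≥ 1`.) -/
noncomputable def Mmat (θ : ℝ) : (j : ℕ) → Matrix (Fin (2 ^ j)) (Fin (2 ^ j)) ℝ
  | 0 => 1
  | 1 => Matrix.of ![![Real.cos θ, Real.sin θ], ![Real.sin θ, -Real.cos θ]]
  | (j + 2) => Matrix.reindex (pe (j + 1)) (pe (j + 1))
      (Matrix.fromBlocks
        (Real.cos θ • Mmat θ (j + 1)) (Real.sin θ • Mmat θ (j + 1))
        (Real.sin θ • Mmat θ (j + 1)) ((-Real.cos θ) • Mmat θ (j + 1)))
/-- The sup-sequence `𝒮_{j,k}(α)` for the blockwise bilinear map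
`D_j(u,v) = ⟨u, w_j⟩ M_j(π/4) v` (all entries of `w_j` equal `2^{−j/2}`) and the
vector `α` with block entries `α_{j,k} = 1/(j·2^{j/2})`:
`𝒮_{j,k}(α) = sup { |(D_j(v,v))_k| : v ∈ ℝ^{2^j}, |v_m| ≤ α_{j,m} }`. -/
noncomputable def S17 (j : ℕ) (k : Fin (2 ^ j)) : ℝ :=
  sSup {y : ℝ | ∃ v : Fin (2 ^ j) → ℝ,
    (∀ m, |v m| ≤ 1 / ((j : ℝ) * (2 : ℝ) ^ ((j : ℝ) / 2))) ∧
    y = |(∑ m, v m * (2 : ℝ) ^ (-(j : ℝ) / 2))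
          * (Mmat (Real.pi / 4) j).mulVec v k|}

/-! `M_j(θ)` is a Kronecker power of the reflection `M_1(θ)`, hence symmetric and orthogonal, so
each block of `D` is bounded by Cauchy–Schwarz against the unit vector `w_j`. At `θ = π/4` every
entry of `M_j` is `±2^{-j/2}`; row `0` is constant and, being orthogonal to it, every other row has
equally many signs of each kind. If `s` is the set where row `k` is positive and `A`, `B` are the
sums of `v` over `s` and `sᶜ`, then `D_j(v,v)_k = 2^{-j} (A + B)(A - B)`; over the box
`|v_m| ≤ α_{j,m}` its absolute value is largest when `v = α` on the larger of `s`, `sᶜ` and `0` on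
the other. This gives `𝒮_{j,0} = 1/j²` and `𝒮_{j,k} = 1/(4j²)` otherwise, so `‖𝒮_j(α)‖² ≳ 2^j/j⁴` is not summable. -/

open Real Matrix Finset

lemma sqrt_two_div_two_eq_two_rpow : √2 / 2 = (2 : ℝ) ^ (-(1 : ℝ) / 2) := by
  rw [neg_div, rpow_neg zero_le_two, ← sqrt_eq_rpow]
  field_simp
  rw [sq_sqrt zero_le_two]

lemma two_rpow_neg_half (n : ℕ) : (2 : ℝ) ^ (-(n : ℝ) / 2) = (√2 / 2) ^ n := by
  rw [sqrt_two_div_two_eq_two_rpow, ← rpow_natCast, ← rpow_mul zero_le_two]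
  ring_nf

lemma sq_sqrt_two_div_two_pow_mul (n : ℕ) : ((√2 / 2) ^ n) ^ 2 * 2 ^ n = 1 := by
  rw [← pow_mul, mul_comm n 2, pow_mul, div_pow, sq_sqrt zero_le_two, ← mul_pow]
  norm_num

lemma Mmat_add_two_apply (θ : ℝ) (j : ℕ) (a b : Fin (2 ^ (j + 2))) :
    Mmat θ (j + 2) a b =
      fromBlocks (cos θ • Mmat θ (j + 1)) (sin θ • Mmat θ (j + 1))
        (sin θ • Mmat θ (j + 1)) ((-cos θ) • Mmat θ (j + 1))
        ((pe (j + 1)).symm a) ((pe (j + 1)).symm b) :=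
  rfl

lemma Mmat_transpose (θ : ℝ) : ∀ j, (Mmat θ j)ᵀ = Mmat θ j
  | 0 => transpose_one
  | 1 => by ext a b; fin_cases a <;> fin_cases b <;> rfl
  | j + 2 => by
    rw [Mmat, reindex_apply, transpose_submatrix, fromBlocks_transpose]
    simp only [transpose_smul, Mmat_transpose θ (j + 1)]

lemma Mmat_mul_self (θ : ℝ) : ∀ j, Mmat θ j * Mmat θ j = 1
  | 0 => one_mul 1
  | 1 => by
    ext a b
    fin_cases a <;> fin_cases b <;> simp [Mmat, mul_apply, Fin.sum_univ_two, ← sq] <;> ring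
  | j + 2 => by
    rw [Mmat, reindex_apply, submatrix_mul_equiv, fromBlocks_multiply]
    simp only [Matrix.smul_mul, Matrix.mul_smul, Mmat_mul_self θ (j + 1), smul_smul, ← add_smul]
    simp [mul_comm, ← sq]

lemma pe_symm_zero (j : ℕ) : (pe j).symm 0 = Sum.inl 0 :=
  (pe j).symm_apply_eq.mpr (Fin.ext (by simp [pe]))

lemma Mmat_pi_div_four_zero_apply {j : ℕ} (hj : 1 ≤ j) (m : Fin (2 ^ j)) :
    Mmat (π / 4) j 0 m = (√2 / 2) ^ j := by
  induction j, hj using Nat.le_induction with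
  | base => fin_cases m <;> simp [Mmat, cos_pi_div_four, sin_pi_div_four]
  | succ j hj ih =>
    obtain ⟨i, rfl⟩ : ∃ i, j = i + 1 := ⟨j - 1, by omega⟩
    rw [Mmat_add_two_apply, pe_symm_zero]
    rcases (pe (i + 1)).symm m with m | m <;>
      simp [ih, cos_pi_div_four, sin_pi_div_four, pow_succ, mul_comm]

lemma abs_Mmat_pi_div_four_apply {j : ℕ} (hj : 1 ≤ j) (k m : Fin (2 ^ j)) :
    |Mmat (π / 4) j k m| = (√2 / 2) ^ j := by
  have hc : 0 ≤ √2 / 2 := by positivity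
  induction j, hj using Nat.le_induction with
  | base => fin_cases k <;> fin_cases m <;> simp [Mmat, cos_pi_div_four, sin_pi_div_four, hc]
  | succ j hj ih =>
    obtain ⟨i, rfl⟩ : ∃ i, j = i + 1 := ⟨j - 1, by omega⟩
    rw [Mmat_add_two_apply]
    rcases (pe (i + 1)).symm k with k | k <;> rcases (pe (i + 1)).symm m with m | m <;>
      simp [abs_mul, ih, cos_pi_div_four, sin_pi_div_four, hc, pow_succ, mul_comm]

/-- Row `k` is orthogonal to the constant row `0`. -/
lemma sum_Mmat_pi_div_four_row {j : ℕ} (hj : 1 ≤ j) {k : Fin (2 ^ j)} (hk : k ≠ 0) :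
    ∑ m, Mmat (π / 4) j k m = 0 := by
  have hk0 := congr_fun₂ (Mmat_mul_self (π / 4) j) k 0
  have hsymm (m : Fin (2 ^ j)) : Mmat (π / 4) j m 0 = Mmat (π / 4) j 0 m :=
    congr_fun₂ (Mmat_transpose (π / 4) j) 0 m
  simp only [mul_apply, hsymm, Mmat_pi_div_four_zero_apply hj, one_apply_ne hk,
    ← sum_mul] at hk0
  exact (mul_eq_zero.mp hk0).resolve_right (by positivity)

section SignPattern

variable {ι : Type*} [Fintype ι] [DecidableEq ι]

lemma sum_ite_mem_mul (s : Finset ι) (c : ℝ) (v : ι → ℝ) :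
    ∑ m, (if m ∈ s then c else -c) * v m = c * (∑ m ∈ s, v m - ∑ m ∈ sᶜ, v m) := by
  simp only [ite_mul, sum_ite, filter_mem_eq_inter, univ_inter,
    filter_not, ← compl_eq_univ_sdiff, neg_mul, sum_neg_distrib, ← mul_sum]
  ring

lemma abs_sum_mul_sum_sub_sum_compl_le (s : Finset ι) {a : ℝ} (ha : 0 ≤ a) {v : ι → ℝ}
    (hv : ∀ m, |v m| ≤ a) :
    |(∑ m, v m) * (∑ m ∈ s, v m - ∑ m ∈ sᶜ, v m)| ≤ (max (#s : ℝ) #sᶜ * a) ^ 2 := by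
  have hpart (t : Finset ι) (ht : (#t : ℝ) ≤ max (#s : ℝ) #sᶜ) :
      (∑ m ∈ t, v m) ^ 2 ≤ (max (#s : ℝ) #sᶜ * a) ^ 2 := by
    have habs : |∑ m ∈ t, v m| ≤ max (#s : ℝ) #sᶜ * a :=
      calc |∑ m ∈ t, v m| ≤ ∑ m ∈ t, |v m| := abs_sum_le_sum_abs _ _
        _ ≤ #t * a := by simpa using sum_le_card_nsmul t _ a fun m _ => hv m
        _ ≤ max (#s : ℝ) #sᶜ * a := mul_le_mul_of_nonneg_right ht ha
    simpa only [sq_abs] using pow_le_pow_left₀ (abs_nonneg _) habs 2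
  rw [← sum_add_sum_compl s v, show (∑ m ∈ s, v m + ∑ m ∈ sᶜ, v m) * (∑ m ∈ s, v m - ∑ m ∈ sᶜ, v m)
      = (∑ m ∈ s, v m) ^ 2 - (∑ m ∈ sᶜ, v m) ^ 2 by ring]
  exact abs_sub_le_of_nonneg_of_le (sq_nonneg _) (hpart s (le_max_left _ _))
    (sq_nonneg _) (hpart sᶜ (le_max_right _ _))

lemma exists_abs_sum_mul_sum_sub_sum_compl_eq (s : Finset ι) {a : ℝ} (ha : 0 ≤ a) :
    ∃ v : ι → ℝ, (∀ m, |v m| ≤ a) ∧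
      |(∑ m, v m) * (∑ m ∈ s, v m - ∑ m ∈ sᶜ, v m)| = (max (#s : ℝ) #sᶜ * a) ^ 2 := by
  wlog h : #sᶜ ≤ #s generalizing s
  · obtain ⟨v, hv, hval⟩ := this sᶜ (by rw [compl_compl]; omega)
    rw [compl_compl, max_comm, ← abs_neg, ← mul_neg, neg_sub] at hval
    exact ⟨v, hv, hval⟩
  refine ⟨fun m => if m ∈ s then a else 0, fun m => ?_, ?_⟩
  · by_cases hm : m ∈ s <;> simp [hm, abs_of_nonneg ha, ha]
  · have hsum : ∑ m, (if m ∈ s then a else 0) = #s * a := by simp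
    have hs : ∑ m ∈ s, (if m ∈ s then a else 0) = #s * a := by simp
    have hsc : ∑ m ∈ sᶜ, (if m ∈ s then a else 0) = 0 :=
      sum_eq_zero fun m hm => if_neg (mem_compl.mp hm)
    rw [hsum, hs, hsc, max_eq_left (by exact_mod_cast h), sub_zero, ← sq,
      abs_of_nonneg (sq_nonneg _)]

end SignPattern

lemma one_div_mul_two_rpow_half (n : ℕ) :
    1 / ((n : ℝ) * (2 : ℝ) ^ ((n : ℝ) / 2)) = (√2 / 2) ^ n / n := by
  rw [← two_rpow_neg_half, neg_div, rpow_neg zero_le_two]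
  field_simp

lemma S17_eq_of_row_eq {j : ℕ} (k : Fin (2 ^ j)) (s : Finset (Fin (2 ^ j)))
    (hs : ∀ m, Mmat (π / 4) j k m = if m ∈ s then (√2 / 2) ^ j else -(√2 / 2) ^ j) :
    S17 j k = ((√2 / 2) ^ j) ^ 2 * (max (#s : ℝ) #sᶜ * ((√2 / 2) ^ j / j)) ^ 2 := by
  rw [S17, two_rpow_neg_half, one_div_mul_two_rpow_half]
  set c := (√2 / 2) ^ j
  have hval (v : Fin (2 ^ j) → ℝ) : |(∑ m, v m * c) * (Mmat (π / 4) j *ᵥ v) k|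
      = c ^ 2 * |(∑ m, v m) * (∑ m ∈ s, v m - ∑ m ∈ sᶜ, v m)| := by
    simp only [mulVec, dotProduct, hs, sum_ite_mem_mul, ← sum_mul]
    rw [← abs_of_nonneg (sq_nonneg c), ← abs_mul]
    ring_nf
  have ha : 0 ≤ c / j := by positivity
  simp only [hval]
  refine IsGreatest.csSup_eq ⟨?_, ?_⟩
  · obtain ⟨v, hv, hv_eq⟩ := exists_abs_sum_mul_sum_sub_sum_compl_eq s ha
    exact ⟨v, hv, by rw [hv_eq]⟩
  · rintro _ ⟨v, hv, rfl⟩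
    exact mul_le_mul_of_nonneg_left (abs_sum_mul_sum_sub_sum_compl_le s ha hv) (sq_nonneg c)

lemma S17_zero {j : ℕ} (hj : 1 ≤ j) : S17 j 0 = 1 / (j : ℝ) ^ 2 := by
  rw [S17_eq_of_row_eq 0 univ fun m => by rw [if_pos (mem_univ m), Mmat_pi_div_four_zero_apply hj]]
  simp only [compl_univ, card_univ, card_empty, Fintype.card_fin, Nat.cast_pow, Nat.cast_ofNat,
    Nat.cast_zero, max_eq_left (by positivity : (0 : ℝ) ≤ 2 ^ j)]
  rw [show ∀ c : ℝ, c ^ 2 * (2 ^ j * (c / j)) ^ 2 = (c ^ 2 * 2 ^ j) ^ 2 / j ^ 2 by intro c; ring,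
    sq_sqrt_two_div_two_pow_mul, one_pow]

lemma S17_of_ne_zero {j : ℕ} (hj : 1 ≤ j) {k : Fin (2 ^ j)} (hk : k ≠ 0) :
    S17 j k = 1 / (4 * (j : ℝ) ^ 2) := by
  set c := (√2 / 2) ^ j
  set s : Finset (Fin (2 ^ j)) := {m | Mmat (π / 4) j k m = c}
  have hs (m : Fin (2 ^ j)) : Mmat (π / 4) j k m = if m ∈ s then c else -c := by
    by_cases h : Mmat (π / 4) j k m = c
    · simp [s, h]
    · simpa [s, h] using
        ((abs_eq (by positivity)).mp (abs_Mmat_pi_div_four_apply hj k m)).resolve_left h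
  have hbalanced : (#s : ℝ) = #sᶜ := by
    have h1 := sum_ite_mem_mul s c fun _ => 1
    simp only [mul_one, ← hs, sum_Mmat_pi_div_four_row hj hk, sum_const, nsmul_eq_mul] at h1
    have hc : c ≠ 0 := by positivity
    exact sub_eq_zero.mp ((mul_eq_zero.mp h1.symm).resolve_left hc)
  have htotal : (#s : ℝ) + #sᶜ = 2 ^ j := by
    exact_mod_cast (card_add_card_compl s).trans (by simp)
  rw [S17_eq_of_row_eq k s hs, ← hbalanced, max_self, show (#s : ℝ) = 2 ^ j / 2 by linarith,
    show c ^ 2 * (2 ^ j / 2 * (c / j)) ^ 2 = (c ^ 2 * 2 ^ j) ^ 2 / (4 * j ^ 2) by ring,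
    sq_sqrt_two_div_two_pow_mul, one_pow]

lemma sum_S17_sq {j : ℕ} (hj : 1 ≤ j) :
    ∑ k, S17 j k ^ 2 = 1 / (j : ℝ) ^ 4 + ((2 : ℝ) ^ j - 1) / (16 * (j : ℝ) ^ 4) := by
  rw [← add_sum_erase _ _ (mem_univ 0), S17_zero hj,
    sum_congr rfl fun k hk => by rw [S17_of_ne_zero hj (ne_of_mem_erase hk)],
    sum_const, card_erase_of_mem (mem_univ 0), card_univ, Fintype.card_fin, nsmul_eq_mul,
    Nat.cast_sub Nat.one_le_two_pow]
  push_cast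
  field_simp
  ring

lemma le_sum_S17_sq {j : ℕ} (hj : 1 ≤ j) :
    (2 : ℝ) ^ j / (16 * (j : ℝ) ^ 4) ≤ ∑ k, S17 j k ^ 2 := by
  rw [sum_S17_sq hj]
  calc (2 : ℝ) ^ j / (16 * (j : ℝ) ^ 4)
      = 1 / (j : ℝ) ^ 4 + ((2 : ℝ) ^ j - 1) / (16 * (j : ℝ) ^ 4) - 15 / (16 * (j : ℝ) ^ 4) := by
        field_simp; ring
    _ ≤ _ := sub_le_self _ (by positivity)

lemma not_summable_sum_S17_sq : ¬ Summable fun j : ℕ => ∑ k, S17 (j + 1) k ^ 2 := by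
  intro h
  have hpoly := (tendsto_pow_const_div_const_pow_of_one_lt 4 one_lt_two).comp
    (Filter.tendsto_add_atTop_nat 1)
  obtain ⟨j, hS, hpow⟩ := ((h.tendsto_atTop_zero.eventually (gt_mem_nhds one_pos)).and
    (hpoly.eventually (gt_mem_nhds (by norm_num : (0 : ℝ) < 1 / 16)))).exists
  have hlb := le_sum_S17_sq (Nat.le_add_left 1 j)
  simp only [Function.comp_apply] at hpow
  rw [div_lt_iff₀ (by positivity)] at hpow
  rw [div_le_iff₀ (by positivity)] at hlb
  have hpos : (0 : ℝ) < ((j + 1 : ℕ) : ℝ) ^ 4 := by positivity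
  nlinarith

lemma sum_mulVec_sq_of_transpose_mul_self {n R : Type*} [Fintype n] [DecidableEq n] [CommRing R]
    {A : Matrix n n R} (hA : Aᵀ * A = 1) (v : n → R) :
    ∑ k, (A *ᵥ v) k ^ 2 = ∑ k, v k ^ 2 := by
  have h : (A *ᵥ v) ⬝ᵥ (A *ᵥ v) = v ⬝ᵥ v := by
    rw [dotProduct_mulVec, ← mulVec_transpose, mulVec_mulVec, hA, one_mulVec, dotProduct_comm]
  simpa only [dotProduct, sq] using h

lemma sq_sum_mul_sqrt_two_div_two_pow_le (n : ℕ) (u : Fin (2 ^ n) → ℝ) :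
    (∑ m, u m * (√2 / 2) ^ n) ^ 2 ≤ ∑ m, u m ^ 2 :=
  calc (∑ m, u m * (√2 / 2) ^ n) ^ 2
      ≤ (∑ m, u m ^ 2) * ∑ _m : Fin (2 ^ n), ((√2 / 2) ^ n) ^ 2 :=
        sum_mul_sq_le_sq_mul_sq _ _ _
    _ = ∑ m, u m ^ 2 := by
        rw [sum_const, card_univ, Fintype.card_fin, nsmul_eq_mul, Nat.cast_pow, Nat.cast_ofNat,
          mul_comm (2 ^ n : ℝ), sq_sqrt_two_div_two_pow_mul, mul_one]

lemma sum_sq_inner_mul_Mmat_mulVec_le (θ : ℝ) (n : ℕ) (u v : Fin (2 ^ n) → ℝ) :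
    ∑ k, ((∑ m, u m * (√2 / 2) ^ n) * (Mmat θ n *ᵥ v) k) ^ 2
      ≤ (∑ m, u m ^ 2) * ∑ m, v m ^ 2 := by
  have horth : (Mmat θ n)ᵀ * Mmat θ n = 1 := by rw [Mmat_transpose, Mmat_mul_self]
  simp only [mul_pow, ← mul_sum, sum_mulVec_sq_of_transpose_mul_self horth]
  exact mul_le_mul_of_nonneg_right (sq_sum_mul_sqrt_two_div_two_pow_le n u)
    (sum_nonneg fun m _ => sq_nonneg _)

lemma summable_and_tsum_le_tsum_mul_tsum {ι : Type*} {f a b : ι → ℝ} (hf : ∀ i, 0 ≤ f i)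
    (hfab : ∀ i, f i ≤ a i * b i) (ha₀ : ∀ i, 0 ≤ a i) (hb₀ : ∀ i, 0 ≤ b i)
    (ha : Summable a) (hb : Summable b) :
    Summable f ∧ ∑' i, f i ≤ (∑' i, a i) * ∑' i, b i := by
  have hle (i : ι) : f i ≤ a i * ∑' i, b i :=
    (hfab i).trans (mul_le_mul_of_nonneg_left (hb.le_tsum i fun j _ => hb₀ j) (ha₀ i))
  have hf_summable := Summable.of_nonneg_of_le hf hle (ha.mul_right _)
  exact ⟨hf_summable, (hf_summable.tsum_le_tsum hle (ha.mul_right _)).trans_eq tsum_mul_right⟩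

/-- The blockwise bilinear map `D` built from `M_j(π/4)` is bounded
on `ℓ² ≅ ⊕_{j≥1} ℝ^{2^j}` with `‖D(u,v)‖ ≤ ‖u‖‖v‖`, yet for the vector `α ∈ ℓ²` with
block entries `1/(j·2^{j/2})` one has
`‖𝒮_j(α)‖² = 1/j⁴ + (2^j − 1)/(16 j⁴) ≥ 2^j/(16 j⁴)` for all `j ≥ 1`, so that
`𝒮(α) ∉ ℓ²`: boundedness of `D` does not imply that the reverse-norm space is closed
under the action of `D`. -/
theorem stmt17 :
    -- `D` is bounded on `ℓ² ≅ ⊕_{j ≥ 1} ℝ^{2^j}` (blocks indexed by `j+1`, `j : ℕ`):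
    (∀ u v : (j : ℕ) → Fin (2 ^ (j + 1)) → ℝ,
      Summable (fun j => ∑ i, (u j i) ^ 2) → Summable (fun j => ∑ i, (v j i) ^ 2) →
      Summable (fun j => ∑ k, ((∑ m, u j m * (2 : ℝ) ^ (-((j : ℝ) + 1) / 2))
          * (Mmat (Real.pi / 4) (j + 1)).mulVec (v j) k) ^ 2) ∧
      Real.sqrt (∑' j : ℕ, ∑ k, ((∑ m, u j m * (2 : ℝ) ^ (-((j : ℝ) + 1) / 2))
          * (Mmat (Real.pi / 4) (j + 1)).mulVec (v j) k) ^ 2)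
        ≤ Real.sqrt (∑' j : ℕ, ∑ i, (u j i) ^ 2)
          * Real.sqrt (∑' j : ℕ, ∑ i, (v j i) ^ 2)) ∧
    -- the block norms of `𝒮(α)`:
    (∀ j : ℕ, 1 ≤ j →
      (∑ k, (S17 j k) ^ 2
        = 1 / (j : ℝ) ^ 4 + ((2 : ℝ) ^ j - 1) / (16 * (j : ℝ) ^ 4)) ∧
      (2 : ℝ) ^ j / (16 * (j : ℝ) ^ 4) ≤ ∑ k, (S17 j k) ^ 2) ∧
    -- hence `𝒮(α) ∉ ℓ²`:
    ¬ Summable (fun j : ℕ => ∑ k, (S17 (j + 1) k) ^ 2) := by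
  refine ⟨fun u v hu hv => ?_, fun j hj => ⟨sum_S17_sq hj, le_sum_S17_sq hj⟩,
    not_summable_sum_S17_sq⟩
  have hw (j : ℕ) : (2 : ℝ) ^ (-((j : ℝ) + 1) / 2) = (√2 / 2) ^ (j + 1) := by
    simpa using two_rpow_neg_half (j + 1)
  have hsq_nonneg (n : ℕ) (x : Fin (2 ^ n) → ℝ) : 0 ≤ ∑ i, x i ^ 2 :=
    sum_nonneg fun i _ => sq_nonneg _
  simp only [hw]
  obtain ⟨hsum, hle⟩ := summable_and_tsum_le_tsum_mul_tsum (fun j => hsq_nonneg _ _)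
    (fun j => sum_sq_inner_mul_Mmat_mulVec_le _ _ (u j) (v j))
    (fun j => hsq_nonneg _ (u j)) (fun j => hsq_nonneg _ (v j)) hu hv
  exact ⟨hsum, (sqrt_le_sqrt hle).trans_eq (sqrt_mul (tsum_nonneg fun j => hsq_nonneg _ _) _)⟩
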